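/- Let H(q,t,a) be the hook super-polynomial of the trefoil and write t·H(q,t,a) = Σ_{i,j,m} c(i,j,m) a^i q^j t^m with c(i,j,m) ∈ ℤ and m ranging over nonnegative integers. Then for every i, j and every N ≥ 0, the partial sum Σ_{m=0}^{N} c(i,j,m) is nonnegative. -/

import Mathlib

/-!
Write `t·H = P + (1 - t) Q` with `P, Q` polynomials with nonnegative coefficients. Then
`t·H / (1 - t) = P / (1 - t) + Q`, so every partial sum of `t`-coefficients of `t·H` is a
partial sum of coefficients of `P` plus a single coefficient of `Q`.
-/

open MvPolynomial

/-- Monomial `a^i q^j t^m` in `ℤ[a,q,t]` with `a = X 0`, `q = X 1`, `t = X 2`. -/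
noncomputable def mon (i j m : ℕ) : MvPolynomial (Fin 3) ℤ :=
  X 0 ^ i * X 1 ^ j * X 2 ^ m

/-- `t · H(q,t,a)` for the hook super-polynomial `H = HD_{3,2}(ω₁+ω₂; q,t,a)`
of the trefoil; it is a genuine polynomial in `a = X 0`, `q = X 1`, `t = X 2`. -/
noncomputable def tH : MvPolynomial (Fin 3) ℤ :=
  mon 0 0 1 + mon 3 6 0 + 2 * mon 0 1 2 - mon 0 1 3 + 2 * mon 0 2 3 +
    mon 0 3 3 - mon 0 2 4 + 2 * mon 0 3 4 - mon 0 3 5 + 2 * mon 0 4 5 +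
    mon 0 5 6 +
    (2 * mon 1 2 1 + mon 1 3 1 + mon 1 1 0 - mon 1 2 2 + 3 * mon 1 3 2 +
      mon 1 4 2 - mon 1 3 3 + 3 * mon 1 4 3 + mon 1 5 3 - mon 1 4 4 +
      2 * mon 1 5 4 + mon 1 6 5) +
    (mon 2 4 1 + mon 2 5 1 + mon 2 3 0 + mon 2 4 0 - mon 2 4 2 +
      mon 2 5 2 + mon 2 6 2 + mon 2 6 3)

/-- The coefficient `c(i,j,m)` of `a^i q^j t^m` in `t·H`. -/
noncomputable def cHook (i j m : ℕ) : ℤ :=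
  MvPolynomial.coeff
    (Finsupp.single 0 i + Finsupp.single 1 j + Finsupp.single 2 m) tH

namespace MvPolynomial

open Finset

variable {σ R : Type*} {k : σ} {d : σ →₀ ℕ}

theorem sum_range_succ_coeff_X_mul [CommSemiring R] (hd : d k = 0)
    (p : MvPolynomial σ R) (N : ℕ) :
    ∑ m ∈ range (N + 1), coeff (d + Finsupp.single k m) (X k * p) =
      ∑ m ∈ range N, coeff (d + Finsupp.single k m) p := by
  classical
  have h_zero : coeff (d + Finsupp.single k 0) (X k * p) = 0 := by
    rw [coeff_X_mul', if_neg (by simpa using hd)]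
  rw [sum_range_succ', h_zero, add_zero]
  refine sum_congr rfl fun m _ => ?_
  rw [Finsupp.single_add k m 1, ← add_assoc, add_comm _ (Finsupp.single k 1), coeff_X_mul]

theorem sum_range_coeff_one_sub_X_mul [CommRing R] (hd : d k = 0)
    (p : MvPolynomial σ R) (N : ℕ) :
    ∑ m ∈ range (N + 1), coeff (d + Finsupp.single k m) ((1 - X k) * p) =
      coeff (d + Finsupp.single k N) p := by
  simp only [sub_mul, one_mul, coeff_sub, sum_sub_distrib, sum_range_succ_coeff_X_mul hd,
    sum_range_succ, add_sub_cancel_left]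

theorem sum_range_coeff_map_add_one_sub_X_mul_map_nonneg (hd : d k = 0)
    (P Q : MvPolynomial σ ℕ) (N : ℕ) :
    0 ≤ ∑ m ∈ range (N + 1), coeff (d + Finsupp.single k m)
      (map (Nat.castRingHom ℤ) P + (1 - X k) * map (Nat.castRingHom ℤ) Q) := by
  simp only [coeff_add, sum_add_distrib, sum_range_coeff_one_sub_X_mul hd, coeff_map,
    eq_natCast]
  positivity

end MvPolynomial

theorem tH_eq_map_add_one_sub_X_mul_map :
    ∃ P Q : MvPolynomial (Fin 3) ℕ,
      tH = map (Nat.castRingHom ℤ) P + (1 - X 2) * map (Nat.castRingHom ℤ) Q := by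
  set a : MvPolynomial (Fin 3) ℕ := X 0
  set q : MvPolynomial (Fin 3) ℕ := X 1
  set t : MvPolynomial (Fin 3) ℕ := X 2
  refine ⟨t + q * t ^ 2 + q ^ 2 * t ^ 3 + q ^ 3 * t ^ 3 + q ^ 3 * t ^ 4 + 2 * q ^ 4 * t ^ 5 +
      q ^ 5 * t ^ 6 + a ^ 3 * q ^ 6 +
      a * (q + q ^ 2 * t + q ^ 3 * t + 2 * q ^ 3 * t ^ 2 + q ^ 4 * t ^ 2 + 2 * q ^ 4 * t ^ 3 +
        q ^ 5 * t ^ 3 + 2 * q ^ 5 * t ^ 4 + q ^ 6 * t ^ 5) +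
      a ^ 2 * (q ^ 3 + q ^ 4 + q ^ 5 * t + q ^ 5 * t ^ 2 + q ^ 6 * t ^ 2 + q ^ 6 * t ^ 3),
    q * t * (t + a * q) * (1 + q * t + q ^ 2 * t ^ 2) + a ^ 2 * q ^ 4 * t, ?_⟩
  simp only [a, q, t, tH, mon, map_add, map_mul, map_pow, map_X, map_ofNat, map_one]
  ring

theorem stmt_18 (i j N : ℕ) :
    0 ≤ ∑ m ∈ Finset.range (N + 1), cHook i j m := by
  obtain ⟨P, Q, h⟩ := tH_eq_map_add_one_sub_X_mul_map
  simp only [cHook, h]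
  exact sum_range_coeff_map_add_one_sub_X_mul_map_nonneg (by simp) P Q N
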